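/- arXiv:0709.0373 — 2 statements merged into one kernel-verified Lean document; each statement's English description precedes it below -/
import Mathlib

section
/- Let A be a subspace arrangement in ℂ^l (no member contained in another), x₀ ∈ A, Ã'' = {x₀ ∩ y : y ∈ A \ {x₀}}, and let A'' be obtained from Ã'' by deleting every element strictly contained in another element of Ã''. Then the natural inclusion D(A'') ↪ D(Ã'') is a quasi-isomorphism. -/
/-!
Formalization of the Yuzvinsky–Feichtner rational model `D(B)` of the
complement of an arrangement of linear subspaces of `ℂ^l`, together with the
deletion/restriction constructions of the paper.
-/

open scoped Classical

noncomputable section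

/-- The type of linear subspaces of `ℂ^l`. -/
abbrev Subsp (l : ℕ) := Submodule ℂ (Fin l → ℂ)

/-- Intersection of a finite set of subspaces (`⊤`, i.e. `ℂ^l`, for the empty set). -/
def inter {l : ℕ} (σ : Finset (Subsp l)) : Subsp l := σ.inf id

/-- Underlying vector space of the Yuzvinsky–Feichtner model: formal ℚ-linear
combinations of finite sets of subspaces (basis elements are the `σ ⊆ B`). -/
abbrev DFull (l : ℕ) := Finset (Subsp l) →₀ ℚ

/-- 1-based position of `x` inside `σ`, with respect to the linear order `r`. -/
def pos {l : ℕ} (r : LinearOrder (Subsp l)) (σ : Finset (Subsp l)) (x : Subsp l) : ℕ :=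
  (σ.filter fun y => r.lt y x).card + 1

/-- Value of the differential on the basis element `σ`:
`dσ = ∑_{j : ∩(σ∖{x_j}) = ∩σ} (−1)^j (σ∖{x_j})`. -/
def dBasis {l : ℕ} (r : LinearOrder (Subsp l)) (σ : Finset (Subsp l)) : DFull l :=
  ∑ x ∈ σ.filter fun x => inter (σ.erase x) = inter σ,
    ((-1 : ℚ) ^ pos r σ x) • Finsupp.single (σ.erase x) (1 : ℚ)

/-- The differential of the Yuzvinsky–Feichtner complex. -/
def diff {l : ℕ} (r : LinearOrder (Subsp l)) : DFull l →ₗ[ℚ] DFull l :=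
  Finsupp.lsum ℚ fun σ => LinearMap.toSpanSingleton ℚ (DFull l) (dBasis r σ)

/-- Codimension of `W` inside the ambient subspace `X` (as an integer). -/
def codimIn {l : ℕ} (X W : Subsp l) : ℤ :=
  (Module.finrank ℂ X : ℤ) - (Module.finrank ℂ (W ⊓ X : Subsp l) : ℤ)

/-- Codimension of `W` in `ℂ^l`. -/
def codim {l : ℕ} (W : Subsp l) : ℤ := codimIn ⊤ W

/-- Degree of the basis element `σ`: `deg σ = 2 codim (∩σ) − |σ|`, the
codimension being computed inside the ambient space `X`. -/
def degIn {l : ℕ} (X : Subsp l) (σ : Finset (Subsp l)) : ℤ :=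
  2 * codimIn X (inter σ) - (σ.card : ℤ)

/-- `D(B)`: the span of the basis elements `σ ⊆ B`. -/
def Dsub {l : ℕ} (B : Finset (Subsp l)) : Submodule ℚ (DFull l) :=
  Submodule.span ℚ {f | ∃ σ : Finset (Subsp l), σ ⊆ B ∧ f = Finsupp.single σ (1 : ℚ)}

/-- The degree-`q` component of `D(B)` (ambient space `X`). -/
def Dcomp {l : ℕ} (X : Subsp l) (B : Finset (Subsp l)) (q : ℤ) : Submodule ℚ (DFull l) :=
  Submodule.span ℚ
    {f | ∃ σ : Finset (Subsp l), σ ⊆ B ∧ degIn X σ = q ∧ f = Finsupp.single σ (1 : ℚ)}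

/-- Degree-`q` cocycles of `D(B)`. -/
def cocycles {l : ℕ} (r : LinearOrder (Subsp l)) (X : Subsp l) (B : Finset (Subsp l)) (q : ℤ) :
    Submodule ℚ (DFull l) :=
  Dcomp X B q ⊓ LinearMap.ker (diff r)

/-- Degree-`q` coboundaries of `D(B)`. -/
def cobounds {l : ℕ} (r : LinearOrder (Subsp l)) (X : Subsp l) (B : Finset (Subsp l)) (q : ℤ) :
    Submodule ℚ (DFull l) :=
  Dcomp X B q ⊓ Submodule.map (diff r) (Dcomp X B (q - 1))

/-- Degree-`q` cohomology `H^q(D(B))`. -/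
abbrev cohomology {l : ℕ} (r : LinearOrder (Subsp l)) (X : Subsp l) (B : Finset (Subsp l)) (q : ℤ) :=
  cocycles r X B q ⧸ Submodule.comap (cocycles r X B q).subtype (cobounds r X B q)

lemma Dcomp_mono {l : ℕ} (X : Subsp l) {B B' : Finset (Subsp l)} (h : B' ⊆ B) (q : ℤ) :
    Dcomp X B' q ≤ Dcomp X B q :=
  Submodule.span_mono (by rintro f ⟨σ, h1, h2, rfl⟩; exact ⟨σ, h1.trans h, h2, rfl⟩)

lemma cocycles_mono {l : ℕ} (r : LinearOrder (Subsp l)) (X : Subsp l) {B B' : Finset (Subsp l)}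
    (h : B' ⊆ B) (q : ℤ) : cocycles r X B' q ≤ cocycles r X B q :=
  inf_le_inf_right _ (Dcomp_mono X h q)

lemma cobounds_mono {l : ℕ} (r : LinearOrder (Subsp l)) (X : Subsp l) {B B' : Finset (Subsp l)}
    (h : B' ⊆ B) (q : ℤ) : cobounds r X B' q ≤ cobounds r X B q :=
  inf_le_inf (Dcomp_mono X h q) (Submodule.map_mono (Dcomp_mono X h (q - 1)))

/-- The map induced in degree-`q` cohomology by an inclusion of arrangements `B' ⊆ B`
(induced by the inclusion of cochain complexes `D(B') ↪ D(B)`). -/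
def inducedMap {l : ℕ} (r : LinearOrder (Subsp l)) (X : Subsp l) {B B' : Finset (Subsp l)}
    (h : B' ⊆ B) (q : ℤ) : cohomology r X B' q →ₗ[ℚ] cohomology r X B q :=
  Submodule.mapQ (Submodule.comap (cocycles r X B' q).subtype (cobounds r X B' q))
    (Submodule.comap (cocycles r X B q).subtype (cobounds r X B q))
    (Submodule.inclusion (cocycles_mono r X h q)) (by
      intro v hv
      simp only [Submodule.mem_comap, Submodule.subtype_apply, Submodule.coe_inclusion] at hv ⊢
      exact cobounds_mono r X h q hv)

lemma eraseSubset {l : ℕ} (A : Finset (Subsp l)) (x₀ : Subsp l) : A.erase x₀ ⊆ A := by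
  intro y hy; exact Finset.mem_of_mem_erase hy

/-- A subspace arrangement: no member is contained in another. -/
def IsArrangement {l : ℕ} (A : Finset (Subsp l)) : Prop :=
  ∀ x ∈ A, ∀ y ∈ A, x ≤ y → x = y

/-- `Ã'' = {x₀ ∩ y | y ∈ A'}`. -/
def tildeRestriction {l : ℕ} (x₀ : Subsp l) (A' : Finset (Subsp l)) : Finset (Subsp l) :=
  A'.image fun y => x₀ ⊓ y

/-- The restricted arrangement `A''`: the elements of `Ã''` that are not strictly
contained in another element of `Ã''`. -/
def restriction {l : ℕ} (x₀ : Subsp l) (A' : Finset (Subsp l)) : Finset (Subsp l) :=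
  (tildeRestriction x₀ A').filter fun w => ∀ w' ∈ tildeRestriction x₀ A', ¬ w < w'

lemma restriction_subset {l : ℕ} (x₀ : Subsp l) (A' : Finset (Subsp l)) :
    restriction x₀ A' ⊆ tildeRestriction x₀ A' := Finset.filter_subset _ _

/-- `x₀` is a separator: `x₀ ∩ (∩ A') ⊊ ∩ A'`. -/
def IsSeparator {l : ℕ} (A : Finset (Subsp l)) (x₀ : Subsp l) : Prop :=
  x₀ ⊓ inter (A.erase x₀) < inter (A.erase x₀)

/-- The conditions imposed in the paper on the fixed linear order on the
subspaces: `x₀` comes first, the equivalence classes of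
`y ∼ z ⟺ x₀ ∩ y = x₀ ∩ z` on `A' = A ∖ {x₀}` are consecutive intervals,
and the order on `Ã''` is compatible with the one on `A'`. -/
def GoodOrder {l : ℕ} (r : LinearOrder (Subsp l)) (A : Finset (Subsp l)) (x₀ : Subsp l) : Prop :=
  (∀ y ∈ A.erase x₀, r.lt x₀ y) ∧
  (∀ y ∈ A.erase x₀, ∀ z ∈ A.erase x₀, ∀ w ∈ A.erase x₀,
      r.le y z → r.le z w → x₀ ⊓ y = x₀ ⊓ w → x₀ ⊓ y = x₀ ⊓ z) ∧
  (∀ y ∈ A.erase x₀, ∀ z ∈ A.erase x₀, r.lt y z → x₀ ⊓ y ≠ x₀ ⊓ z →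
      r.lt (x₀ ⊓ y) (x₀ ⊓ z))

/-- Value of the map `φ` on a basis element `σ`. -/
def phiBasis {l : ℕ} (x₀ : Subsp l) (σ : Finset (Subsp l)) : DFull l :=
  if x₀ ∈ σ ∧ Set.InjOn (fun y => x₀ ⊓ y) ↑(σ.erase x₀) then
    ((-1 : ℚ) ^ (σ.card - 1)) • Finsupp.single ((σ.erase x₀).image fun y => x₀ ⊓ y) (1 : ℚ)
  else 0

/-- The map `φ : D(A) → D(Ã'')` (defined on the whole ambient space). -/
def phi {l : ℕ} (x₀ : Subsp l) : DFull l →ₗ[ℚ] DFull l :=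
  Finsupp.lsum ℚ fun σ => LinearMap.toSpanSingleton ℚ (DFull l) (phiBasis x₀ σ)

lemma phi_apply_single {l : ℕ} (x₀ : Subsp l) (σ : Finset (Subsp l)) :
    phi x₀ (Finsupp.single σ (1 : ℚ)) = phiBasis x₀ σ := by
  simp [phi]

lemma diff_apply_single {l : ℕ} (r : LinearOrder (Subsp l)) (σ : Finset (Subsp l)) :
    diff r (Finsupp.single σ (1 : ℚ)) = dBasis r σ := by
  simp [diff]

lemma phi_vanish {l : ℕ} (x₀ : Subsp l) {B : Finset (Subsp l)} (hx : x₀ ∉ B) :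
    ∀ f ∈ Dsub B, phi x₀ f = 0 := by
  intro f hf
  induction hf using Submodule.span_induction with
  | mem f hfmem =>
      obtain ⟨σ, hσ, rfl⟩ := hfmem
      rw [phi_apply_single]
      have hx₀σ : ¬ x₀ ∈ σ := fun h => hx (hσ h)
      simp [phiBasis, hx₀σ]
  | zero => simp
  | add f g _ _ hf hg => simp [map_add, hf, hg]
  | smul c f _ hf => simp [map_smul, hf]

lemma diff_mem {l : ℕ} (r : LinearOrder (Subsp l)) {B : Finset (Subsp l)} :
    ∀ f ∈ Dsub B, diff r f ∈ Dsub B := by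
  intro f hf
  induction hf using Submodule.span_induction with
  | mem f hfmem =>
      obtain ⟨σ, hσ, rfl⟩ := hfmem
      rw [diff_apply_single, dBasis]
      refine Submodule.sum_mem _ fun x hx => Submodule.smul_mem _ _ ?_
      exact Submodule.subset_span ⟨σ.erase x, (Finset.erase_subset _ _).trans hσ, rfl⟩
  | zero => simp
  | add f g _ _ hf hg => rw [map_add]; exact (Dsub B).add_mem hf hg
  | smul c f _ hf => rw [map_smul]; exact (Dsub B).smul_mem c hf

/-- The quotient cochain complex `D(A)/D(A')`. -/
abbrev DQuot {l : ℕ} (A : Finset (Subsp l)) (x₀ : Subsp l) :=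
  Dsub A ⧸ Submodule.comap (Dsub A).subtype (Dsub (A.erase x₀))

/-- Projection `D(A) → D(A)/D(A')`. -/
def quotProj {l : ℕ} (A : Finset (Subsp l)) (x₀ : Subsp l) : Dsub A →ₗ[ℚ] DQuot A x₀ :=
  (Submodule.comap (Dsub A).subtype (Dsub (A.erase x₀))).mkQ

/-- The differential, restricted to `D(A)`. -/
def diffRes {l : ℕ} (r : LinearOrder (Subsp l)) (A : Finset (Subsp l)) : Dsub A →ₗ[ℚ] Dsub A :=
  (diff r).restrict fun f hf => diff_mem r f hf

/-- The differential of the quotient complex `D(A)/D(A')`. -/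
def diffQuot {l : ℕ} (r : LinearOrder (Subsp l)) (A : Finset (Subsp l)) (x₀ : Subsp l) :
    DQuot A x₀ →ₗ[ℚ] DQuot A x₀ :=
  Submodule.mapQ _ _ (diffRes r A) (by
      intro v hv
      simp only [Submodule.mem_comap, Submodule.subtype_apply] at hv ⊢
      exact diff_mem r _ hv)

/-- The map `φ̄ : D(A)/D(A') → D(Ã'')` induced by `φ`. -/
def phiBar {l : ℕ} (x₀ : Subsp l) (A : Finset (Subsp l)) : DQuot A x₀ →ₗ[ℚ] DFull l :=
  Submodule.liftQ _ ((phi x₀).comp (Dsub A).subtype) (by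
    intro v hv
    simp only [Submodule.mem_comap, Submodule.subtype_apply] at hv
    simp only [LinearMap.mem_ker, LinearMap.comp_apply, Submodule.subtype_apply]
    exact phi_vanish x₀ (Finset.notMem_erase x₀ A) _ hv)

/-- The subspace `I_{u,v}` of `D(A)/D(A')`, as a subspace of `D(A)` before
projecting: spanned by the `{x₀,u,τ} − {x₀,v,τ}` and the `{x₀,u,v,τ}`. -/
def IuvFull {l : ℕ} (A : Finset (Subsp l)) (x₀ u v : Subsp l) : Submodule ℚ (DFull l) :=
  Submodule.span ℚ
    ({f | ∃ τ : Finset (Subsp l), (↑τ : Set (Subsp l)) ⊆ ↑A \ {x₀, u, v} ∧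
        f = Finsupp.single (insert x₀ (insert u τ)) (1 : ℚ)
          - Finsupp.single (insert x₀ (insert v τ)) (1 : ℚ)} ∪
     {f | ∃ τ : Finset (Subsp l), (↑τ : Set (Subsp l)) ⊆ ↑A \ {x₀, u, v} ∧
        f = Finsupp.single (insert x₀ (insert u (insert v τ))) (1 : ℚ)})

/-- The subspace `I_{u,v} ⊆ D(A)/D(A')`. -/
def Iuv {l : ℕ} (A : Finset (Subsp l)) (x₀ u v : Subsp l) : Submodule ℚ (DQuot A x₀) :=
  Submodule.map (quotProj A x₀) (Submodule.comap (Dsub A).subtype (IuvFull A x₀ u v))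

/-- The set `E` of pairs `(y,z)` of distinct elements of `A'` with `x₀ ∩ y = x₀ ∩ z`. -/
def Epairs {l : ℕ} (A : Finset (Subsp l)) (x₀ : Subsp l) : Set (Subsp l × Subsp l) :=
  {p | p.1 ∈ A.erase x₀ ∧ p.2 ∈ A.erase x₀ ∧ x₀ ⊓ p.1 = x₀ ⊓ p.2 ∧ p.1 ≠ p.2}

/-- The subspace `V = Σ_{(u,v) ∈ E} I_{u,v}` of `D(A)/D(A')`. -/
def Vsub {l : ℕ} (A : Finset (Subsp l)) (x₀ : Subsp l) : Submodule ℚ (DQuot A x₀) :=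
  ⨆ p ∈ Epairs A x₀, Iuv A x₀ p.1 p.2

/-- Degree-`q` part of the quotient complex `D(A)/D(A')`. -/
def DcompQuot {l : ℕ} (X : Subsp l) (A : Finset (Subsp l)) (x₀ : Subsp l) (q : ℤ) :
    Submodule ℚ (DQuot A x₀) :=
  Submodule.map (quotProj A x₀) (Submodule.comap (Dsub A).subtype (Dcomp X A q))

def cocyclesQuot {l : ℕ} (r : LinearOrder (Subsp l)) (X : Subsp l) (A : Finset (Subsp l))
    (x₀ : Subsp l) (q : ℤ) : Submodule ℚ (DQuot A x₀) :=
  DcompQuot X A x₀ q ⊓ LinearMap.ker (diffQuot r A x₀)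

def coboundsQuot {l : ℕ} (r : LinearOrder (Subsp l)) (X : Subsp l) (A : Finset (Subsp l))
    (x₀ : Subsp l) (q : ℤ) : Submodule ℚ (DQuot A x₀) :=
  DcompQuot X A x₀ q ⊓ Submodule.map (diffQuot r A x₀) (DcompQuot X A x₀ (q - 1))

/-- Degree-`q` cohomology of the quotient complex `D(A)/D(A')`. -/
abbrev cohomologyQuot {l : ℕ} (r : LinearOrder (Subsp l)) (X : Subsp l) (A : Finset (Subsp l))
    (x₀ : Subsp l) (q : ℤ) :=
  cocyclesQuot r X A x₀ q ⧸
    Submodule.comap (cocyclesQuot r X A x₀ q).subtype (coboundsQuot r X A x₀ q)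

/-- Ungraded cocycles of `D(B)`. -/
def cocyclesAll {l : ℕ} (r : LinearOrder (Subsp l)) (B : Finset (Subsp l)) :
    Submodule ℚ (DFull l) :=
  Dsub B ⊓ LinearMap.ker (diff r)

/-- Ungraded coboundaries of `D(B)`. -/
def coboundsAll {l : ℕ} (r : LinearOrder (Subsp l)) (B : Finset (Subsp l)) :
    Submodule ℚ (DFull l) :=
  Dsub B ⊓ Submodule.map (diff r) (Dsub B)

/-- Ungraded cohomology `H^*(D(B))`. -/
abbrev cohomologyAll {l : ℕ} (r : LinearOrder (Subsp l)) (B : Finset (Subsp l)) :=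
  cocyclesAll r B ⧸ Submodule.comap (cocyclesAll r B).subtype (coboundsAll r B)

/-- The map `θ : D(A') → D(Ã'')`, `{x_{i₁},…,x_{i_r}} ↦ {x₀ ∩ x_{i₁},…,x₀ ∩ x_{i_r}}`. -/
def theta {l : ℕ} (x₀ : Subsp l) : DFull l →ₗ[ℚ] DFull l :=
  Finsupp.lsum ℚ fun σ =>
    LinearMap.toSpanSingleton ℚ (DFull l) (Finsupp.single (σ.image fun y => x₀ ⊓ y) (1 : ℚ))

/-- The map `k : D(A) → D(A')`, the identity on basis elements not containing
`x₀`, and zero on those containing `x₀`. -/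
def kmap {l : ℕ} (x₀ : Subsp l) : DFull l →ₗ[ℚ] DFull l :=
  Finsupp.lsum ℚ fun σ =>
    if x₀ ∈ σ then 0 else LinearMap.toSpanSingleton ℚ (DFull l) (Finsupp.single σ (1 : ℚ))

/-- The Euler characteristic of `D(A)`:
`χ = Σ_q (−1)^q dim_ℚ H^q(D(A))` (all degrees lie in `[−|A|, 2l]`). -/
def eulerChar {l : ℕ} (r : LinearOrder (Subsp l)) (A : Finset (Subsp l)) : ℚ :=
  ∑ q ∈ Finset.Icc (-(A.card : ℤ)) (2 * l : ℤ),
    (-1 : ℚ) ^ q * (Module.finrank ℚ (cohomology r ⊤ A q) : ℚ)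

/-- The intersection lattice `L(A)`: all intersections of members of `A`
(with `ℂ^l = ∩∅` as bottom element), ordered by reverse inclusion. -/
def latticeSet {l : ℕ} (A : Finset (Subsp l)) : Set (Subsp l) :=
  {W | ∃ S : Finset (Subsp l), S ⊆ A ∧ W = inter S}

/-- `covL A a b`: in the intersection lattice `L(A)` (ordered by reverse
inclusion), `b` covers `a`. -/
def covL {l : ℕ} (A : Finset (Subsp l)) (a b : Subsp l) : Prop :=
  b < a ∧ ∀ c ∈ latticeSet A, ¬(b < c ∧ c < a)

/-- The meet `a ∧ b` in the intersection lattice `L(A)`: the intersection of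
the members of `A` containing both `a` and `b`. -/
def meetL {l : ℕ} (A : Finset (Subsp l)) (a b : Subsp l) : Subsp l :=
  inter (A.filter fun x => a ≤ x ∧ b ≤ x)

/-- `L(A)` is a geometric lattice: it is a finite atomistic semimodular lattice.
(Atoms are the elements covering the bottom element `ℂ^l`; every element is the
join — i.e. intersection — of the atoms it lies above; and the lattice is
(upper) semimodular.  The join of `a` and `b` in `L(A)` is `a ⊓ b`.) -/
def IsGeometricL {l : ℕ} (A : Finset (Subsp l)) : Prop :=
  (∀ a ∈ latticeSet A, a = sInf {t : Subsp l | t ∈ latticeSet A ∧ covL A ⊤ t ∧ a ≤ t}) ∧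
  (∀ a ∈ latticeSet A, ∀ b ∈ latticeSet A, covL A (meetL A a b) a → covL A b (a ⊓ b))

end

/-!
If `w ⊊ w'` both lie in `B`, then adding `w'` to a set `σ ∋ w` does not change `∩σ`, so
`h σ = ±(σ ∪ {w'})` (for `w ∈ σ ∌ w'`, and `h σ = 0` otherwise) lowers the degree by one, and
`π = 1 - dh - hd` is a chain map homotopic to the identity. It fixes `D(B ∖ {w})` and maps `D(B)`
into it, so `D(B ∖ {w}) ↪ D(B)` is a quasi-isomorphism. Every element of `Ã''` outside `A''` is
strictly contained in an element of `A''`, so these elements can be removed one at a time.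
-/

open Finsupp (single)

section Differential

variable {l : ℕ}

lemma inter_insert_of_le {σ : Finset (Subsp l)} {w w' : Subsp l} (hw : w ∈ σ) (hle : w ≤ w') :
    inter (insert w' σ) = inter σ := by
  unfold inter
  rw [Finset.inf_insert, inf_eq_right]
  exact (Finset.inf_le hw).trans hle

noncomputable def removable (σ : Finset (Subsp l)) : Finset (Subsp l) :=
  σ.filter fun x => inter (σ.erase x) = inter σ

lemma mem_removable {σ : Finset (Subsp l)} {x : Subsp l} :
    x ∈ removable σ ↔ x ∈ σ ∧ inter (σ.erase x) = inter σ :=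
  Finset.mem_filter

lemma dBasis_eq_sum_removable (r : LinearOrder (Subsp l)) (σ : Finset (Subsp l)) :
    dBasis r σ = ∑ x ∈ removable σ, ((-1 : ℚ) ^ pos r σ x) • single (σ.erase x) (1 : ℚ) :=
  rfl

lemma mem_removable_of_le {σ : Finset (Subsp l)} {w w' : Subsp l} (hw : w ∈ σ) (hw' : w' ∈ σ)
    (hne : w ≠ w') (hle : w ≤ w') : w' ∈ removable σ := by
  refine mem_removable.mpr ⟨hw', ?_⟩
  conv_rhs => rw [← Finset.insert_erase hw']
  exact (inter_insert_of_le (Finset.mem_erase.mpr ⟨hne, hw⟩) hle).symm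

lemma removable_erase_swap {σ : Finset (Subsp l)} {x y : Subsp l} (hx : x ∈ removable σ)
    (hy : y ∈ removable (σ.erase x)) : y ∈ removable σ ∧ x ∈ removable (σ.erase y) := by
  obtain ⟨hxσ, hxI⟩ := mem_removable.mp hx
  obtain ⟨hyxσ, hyI⟩ := mem_removable.mp hy
  obtain ⟨hyx, hyσ⟩ := Finset.mem_erase.mp hyxσ
  have hI : inter ((σ.erase y).erase x) = inter σ := by rw [Finset.erase_right_comm, hyI, hxI]
  have hIy : inter (σ.erase y) = inter σ :=
    le_antisymm (hI ▸ Finset.inf_mono (Finset.erase_subset _ _))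
      (Finset.inf_mono (Finset.erase_subset _ _))
  exact ⟨mem_removable.mpr ⟨hyσ, hIy⟩,
    mem_removable.mpr ⟨Finset.mem_erase.mpr ⟨Ne.symm hyx, hxσ⟩, by rw [hI, hIy]⟩⟩

lemma pos_eq_pos_erase_add (r : LinearOrder (Subsp l)) {σ : Finset (Subsp l)} {x y : Subsp l}
    (hx : x ∈ σ) :
    pos r σ y = pos r (σ.erase x) y + if r.lt x y then 1 else 0 := by
  unfold pos
  conv_lhs => rw [← Finset.insert_erase hx, Finset.filter_insert]
  split_ifs
  · rw [Finset.card_insert_of_notMem (by simp)]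
  · rfl

/-- Exactly one of `x, y` precedes the other: the source of every sign cancellation below. -/
lemma pos_add_pos (r : LinearOrder (Subsp l)) {σ : Finset (Subsp l)} {x y : Subsp l}
    (hx : x ∈ σ) (hy : y ∈ σ) (hxy : x ≠ y) :
    pos r σ x + pos r σ y = pos r (σ.erase y) x + pos r (σ.erase x) y + 1 := by
  rw [pos_eq_pos_erase_add r hy, pos_eq_pos_erase_add r hx]
  rcases @lt_trichotomy _ r x y with h | h | h
  · rw [if_pos h, if_neg (@lt_asymm _ r.toPreorder _ _ h)]; ring
  · exact absurd h hxy
  · rw [if_pos h, if_neg (@lt_asymm _ r.toPreorder _ _ h)]; ring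

lemma diff_diff_single (r : LinearOrder (Subsp l)) (σ : Finset (Subsp l)) :
    diff r (diff r (single σ 1)) = 0 := by
  simp_rw [diff_apply_single, dBasis_eq_sum_removable, map_sum, map_smul, diff_apply_single,
    dBasis_eq_sum_removable, Finset.smul_sum, smul_smul, ← pow_add]
  rw [Finset.sum_sigma']
  refine Finset.sum_involution (fun p _ => ⟨p.2, p.1⟩) (fun p hp => ?_) (fun p hp _ h => ?_)
    (fun p hp => ?_) (fun _ _ => rfl)
  all_goals simp only [Finset.mem_sigma] at hp
  · obtain ⟨hyx, hyσ⟩ := Finset.mem_erase.mp (mem_removable.mp hp.2).1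
    have hxσ := (mem_removable.mp hp.1).1
    have hpos := pos_add_pos r hxσ hyσ hyx.symm
    have hsq : ((-1 : ℚ) ^ (pos r σ p.2 + pos r (σ.erase p.2) p.1)) ^ 2 = 1 := by
      rw [← pow_mul, mul_comm, pow_mul, neg_one_sq, one_pow]
    have hprod : (-1 : ℚ) ^ (pos r σ p.1 + pos r (σ.erase p.1) p.2) *
        (-1) ^ (pos r σ p.2 + pos r (σ.erase p.2) p.1) = -1 := by
      rw [← pow_add, show pos r σ p.1 + pos r (σ.erase p.1) p.2 +
        (pos r σ p.2 + pos r (σ.erase p.2) p.1) = 2 * (pos r (σ.erase p.2) p.1 +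
        pos r (σ.erase p.1) p.2) + 1 by omega, pow_succ, pow_mul, neg_one_sq, one_pow, one_mul]
    rw [Finset.erase_right_comm, ← add_smul]
    convert zero_smul ℚ _
    linear_combination (-1 : ℚ) ^ (pos r σ p.2 + pos r (σ.erase p.2) p.1) * hprod -
      (-1 : ℚ) ^ (pos r σ p.1 + pos r (σ.erase p.1) p.2) * hsq
  · exact (Finset.mem_erase.mp (mem_removable.mp hp.2).1).1 (congrArg Sigma.fst h)
  · simpa only [Finset.mem_sigma] using removable_erase_swap hp.1 hp.2

lemma diff_diff (r : LinearOrder (Subsp l)) (f : DFull l) : diff r (diff r f) = 0 := by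
  induction f using Finsupp.induction_linear with
  | zero => simp
  | add f g hf hg => rw [map_add, map_add, hf, hg, add_zero]
  | single σ c => rw [← Finsupp.smul_single_one, map_smul, map_smul, diff_diff_single, smul_zero]

end Differential

section Homotopy

variable {l : ℕ} (r : LinearOrder (Subsp l)) (w w' : Subsp l)

/-- The sign makes `σ` appear in `d (h σ)` with coefficient `1`. -/
noncomputable def homotopyBasis (σ : Finset (Subsp l)) : DFull l :=
  if w ∈ σ ∧ w' ∉ σ then ((-1 : ℚ) ^ pos r (insert w' σ) w') • single (insert w' σ) 1 else 0

noncomputable def homotopy : DFull l →ₗ[ℚ] DFull l :=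
  Finsupp.lsum ℚ fun σ => LinearMap.toSpanSingleton ℚ (DFull l) (homotopyBasis r w w' σ)

noncomputable def retraction : DFull l →ₗ[ℚ] DFull l :=
  LinearMap.id - diff r ∘ₗ homotopy r w w' - homotopy r w w' ∘ₗ diff r

/-- The summand of `d (h σ)` indexed by `x ∈ σ`. -/
noncomputable def diffHomotopyTerm (σ : Finset (Subsp l)) (x : Subsp l) : DFull l :=
  if inter ((insert w' σ).erase x) = inter (insert w' σ) then
    ((-1 : ℚ) ^ (pos r (insert w' σ) w' + pos r (insert w' σ) x)) •
      single ((insert w' σ).erase x) 1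
  else 0

variable {r w w'}

lemma homotopy_single (σ : Finset (Subsp l)) :
    homotopy r w w' (single σ 1) = homotopyBasis r w w' σ := by
  simp [homotopy]

lemma homotopy_single_eq_zero_of_notMem {σ : Finset (Subsp l)} (hw : w ∉ σ) :
    homotopy r w w' (single σ 1) = 0 := by
  simp [homotopy_single, homotopyBasis, hw]

lemma homotopy_single_eq_zero_of_mem {σ : Finset (Subsp l)} (hw' : w' ∈ σ) :
    homotopy r w w' (single σ 1) = 0 := by
  simp [homotopy_single, homotopyBasis, hw']

lemma retraction_apply (f : DFull l) :
    retraction r w w' f = f - diff r (homotopy r w w' f) - homotopy r w w' (diff r f) :=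
  rfl

lemma diff_retraction (f : DFull l) :
    diff r (retraction r w w' f) = retraction r w w' (diff r f) := by
  simp only [retraction_apply, map_sub, diff_diff, sub_zero, map_zero]

lemma homotopy_dBasis_of_notMem {σ : Finset (Subsp l)} (hw : w ∉ σ) :
    homotopy r w w' (dBasis r σ) = 0 := by
  rw [dBasis_eq_sum_removable, map_sum]
  refine Finset.sum_eq_zero fun x _ => ?_
  rw [map_smul, homotopy_single_eq_zero_of_notMem fun h => hw (Finset.mem_of_mem_erase h),
    smul_zero]

lemma retraction_single_of_notMem {σ : Finset (Subsp l)} (hw : w ∉ σ) :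
    retraction r w w' (single σ 1) = single σ 1 := by
  rw [retraction_apply, homotopy_single_eq_zero_of_notMem hw, diff_apply_single,
    homotopy_dBasis_of_notMem hw, map_zero, sub_zero, sub_zero]

lemma retraction_single_of_mem_of_mem {σ : Finset (Subsp l)} (hw : w ∈ σ) (hw' : w' ∈ σ)
    (hlt : w < w') : retraction r w w' (single σ 1) = 0 := by
  rw [retraction_apply, homotopy_single_eq_zero_of_mem hw', map_zero, sub_zero, diff_apply_single,
    dBasis_eq_sum_removable, map_sum, sub_eq_zero,
    Finset.sum_eq_single_of_mem w' (mem_removable_of_le hw hw' hlt.ne hlt.le)]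
  · rw [map_smul, homotopy_single, homotopyBasis,
      if_pos ⟨Finset.mem_erase.mpr ⟨hlt.ne, hw⟩, Finset.notMem_erase _ _⟩,
      Finset.insert_erase hw', smul_smul, ← pow_add, Even.neg_one_pow ⟨_, rfl⟩, one_smul]
  · intro x _ hxw'
    rw [map_smul]
    by_cases hxw : x = w
    · rw [hxw, homotopy_single_eq_zero_of_notMem (Finset.notMem_erase _ _), smul_zero]
    · rw [homotopy_single_eq_zero_of_mem (Finset.mem_erase.mpr ⟨Ne.symm hxw', hw'⟩), smul_zero]

lemma diff_homotopy_single {σ : Finset (Subsp l)} (hw : w ∈ σ) (hw' : w' ∉ σ) (hle : w ≤ w') :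
    diff r (homotopy r w w' (single σ 1)) =
      single σ 1 + ∑ x ∈ σ, diffHomotopyTerm r w' σ x := by
  rw [homotopy_single, homotopyBasis, if_pos ⟨hw, hw'⟩, map_smul, diff_apply_single,
    dBasis_eq_sum_removable, removable, Finset.sum_filter, Finset.smul_sum,
    Finset.sum_insert hw']
  congr 1
  · rw [Finset.erase_insert hw', if_pos (inter_insert_of_le hw hle).symm, smul_smul, ← pow_add,
      Even.neg_one_pow ⟨_, rfl⟩, one_smul]
  · refine Finset.sum_congr rfl fun x _ => ?_
    rw [diffHomotopyTerm]
    split_ifs <;> simp only [smul_smul, pow_add, smul_zero]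

lemma homotopy_diff_single {σ : Finset (Subsp l)} (hw : w ∈ σ) (hw' : w' ∉ σ) (hle : w ≤ w') :
    homotopy r w w' (diff r (single σ 1)) = -∑ x ∈ σ.erase w, diffHomotopyTerm r w' σ x := by
  rw [diff_apply_single, dBasis_eq_sum_removable, removable, Finset.sum_filter, map_sum,
    ← Finset.add_sum_erase _ _ hw, ← Finset.sum_neg_distrib]
  rw [apply_ite (homotopy r w w'), map_smul,
    homotopy_single_eq_zero_of_notMem (Finset.notMem_erase _ _), smul_zero, map_zero, ite_self,
    zero_add]
  refine Finset.sum_congr rfl fun x hx => ?_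
  obtain ⟨hxw, hxσ⟩ := Finset.mem_erase.mp hx
  have hxw' : x ≠ w' := fun h => hw' (h ▸ hxσ)
  have hwσx : w ∈ σ.erase x := Finset.mem_erase.mpr ⟨Ne.symm hxw, hw⟩
  have hτx : (insert w' σ).erase x = insert w' (σ.erase x) :=
    Finset.erase_insert_of_ne (Ne.symm hxw')
  rw [diffHomotopyTerm, hτx, inter_insert_of_le hwσx hle, inter_insert_of_le hw hle]
  split_ifs
  · rw [map_smul, homotopy_single, homotopyBasis,
      if_pos ⟨hwσx, fun h => hw' (Finset.mem_of_mem_erase h)⟩, smul_smul, ← pow_add, ← hτx,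
      ← neg_smul]
    have hpos := pos_add_pos r (Finset.mem_insert_self w' σ) (Finset.mem_insert_of_mem hxσ)
      (Ne.symm hxw')
    rw [Finset.erase_insert hw'] at hpos
    rw [show pos r (insert w' σ) w' + pos r (insert w' σ) x =
      pos r σ x + pos r ((insert w' σ).erase x) w' + 1 by omega, pow_succ, mul_neg_one, neg_neg]
  · rw [map_zero, neg_zero]

lemma retraction_single_of_mem_of_notMem {σ : Finset (Subsp l)} (hw : w ∈ σ) (hw' : w' ∉ σ)
    (hle : w ≤ w') :
    retraction r w w' (single σ 1) = -diffHomotopyTerm r w' σ w := by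
  rw [retraction_apply, diff_homotopy_single hw hw' hle, homotopy_diff_single hw hw' hle,
    ← Finset.add_sum_erase _ _ hw]
  abel

end Homotopy

section Degree

variable {l : ℕ} (X : Subsp l)

lemma single_mem_Dcomp {B σ : Finset (Subsp l)} {q : ℤ} (hσ : σ ⊆ B) (hdeg : degIn X σ = q) :
    single σ 1 ∈ Dcomp X B q :=
  Submodule.subset_span ⟨σ, hσ, hdeg, rfl⟩

lemma Dcomp_le_comap {B B' : Finset (Subsp l)} {q q' : ℤ} (φ : DFull l →ₗ[ℚ] DFull l)
    (h : ∀ σ ⊆ B, degIn X σ = q → φ (single σ 1) ∈ Dcomp X B' q') :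
    Dcomp X B q ≤ (Dcomp X B' q').comap φ :=
  Submodule.span_le.mpr (by rintro _ ⟨σ, hσ, hdeg, rfl⟩; exact h σ hσ hdeg)

lemma degIn_insert_of_le {σ : Finset (Subsp l)} {w w' : Subsp l} (hw : w ∈ σ) (hw' : w' ∉ σ)
    (hle : w ≤ w') : degIn X (insert w' σ) = degIn X σ - 1 := by
  rw [degIn, degIn, inter_insert_of_le hw hle, Finset.card_insert_of_notMem hw']
  push_cast
  ring

variable {X} {r : LinearOrder (Subsp l)} {B : Finset (Subsp l)} {w w' : Subsp l}

lemma homotopy_mem_Dcomp (hw'B : w' ∈ B) (hle : w ≤ w') {q : ℤ} {f : DFull l}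
    (hf : f ∈ Dcomp X B q) : homotopy r w w' f ∈ Dcomp X B (q - 1) := by
  refine Dcomp_le_comap X _ (fun σ hσ hdeg => ?_) hf
  rw [homotopy_single, homotopyBasis]
  split_ifs with hc
  · refine Submodule.smul_mem _ _ (single_mem_Dcomp X (Finset.insert_subset hw'B hσ) ?_)
    rw [degIn_insert_of_le X hc.1 hc.2 hle, hdeg]
  · exact zero_mem _

lemma diffHomotopyTerm_mem_Dcomp (hw'B : w' ∈ B) (hle : w ≤ w') {σ : Finset (Subsp l)}
    (hσ : σ ⊆ B) (hw : w ∈ σ) (hw' : w' ∉ σ) :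
    diffHomotopyTerm r w' σ w ∈ Dcomp X (B.erase w) (degIn X σ) := by
  rw [diffHomotopyTerm]
  split_ifs with hc
  · refine Submodule.smul_mem _ _ (single_mem_Dcomp X
      (Finset.erase_subset_erase w (Finset.insert_subset hw'B hσ)) ?_)
    rw [degIn, degIn, hc, inter_insert_of_le hw hle,
      Finset.card_erase_of_mem (Finset.mem_insert_of_mem hw), Finset.card_insert_of_notMem hw',
      Nat.add_sub_cancel]
  · exact zero_mem _

lemma retraction_mem_Dcomp (hw'B : w' ∈ B) (hlt : w < w') {q : ℤ} {f : DFull l}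
    (hf : f ∈ Dcomp X B q) : retraction r w w' f ∈ Dcomp X (B.erase w) q := by
  refine Dcomp_le_comap X _ (fun σ hσ hdeg => ?_) hf
  by_cases hw : w ∈ σ
  · by_cases hw' : w' ∈ σ
    · rw [retraction_single_of_mem_of_mem hw hw' hlt]
      exact zero_mem _
    · rw [retraction_single_of_mem_of_notMem hw hw' hlt.le, ← hdeg]
      exact neg_mem (diffHomotopyTerm_mem_Dcomp hw'B hlt.le hσ hw hw')
  · rw [retraction_single_of_notMem hw]
    exact single_mem_Dcomp X (Finset.subset_erase.mpr ⟨hσ, hw⟩) hdeg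

lemma retraction_eq_self (hwB : w ∉ B) {q : ℤ} {f : DFull l} (hf : f ∈ Dcomp X B q) :
    retraction r w w' f = f :=
  LinearMap.eqOn_span' (g := LinearMap.id)
    (by rintro _ ⟨σ, hσ, -, rfl⟩; exact retraction_single_of_notMem fun h => hwB (hσ h)) hf

end Degree

section Cohomology

variable {l : ℕ} (r : LinearOrder (Subsp l)) (X : Subsp l)

lemma inducedMap_mk {B B' : Finset (Subsp l)} (h : B' ⊆ B) {q : ℤ} (x : cocycles r X B' q) :
    inducedMap r X h q (Submodule.Quotient.mk x) =
      Submodule.Quotient.mk (Submodule.inclusion (cocycles_mono r X h q) x) :=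
  rfl

lemma cohomology_mk_eq_zero_iff {B : Finset (Subsp l)} {q : ℤ} (x : cocycles r X B q) :
    (Submodule.Quotient.mk x : cohomology r X B q) = 0 ↔ (x : DFull l) ∈ cobounds r X B q :=
  Submodule.Quotient.mk_eq_zero _

lemma inducedMap_refl {B : Finset (Subsp l)} (h : B ⊆ B) (q : ℤ) :
    inducedMap r X h q = LinearMap.id :=
  Submodule.linearMap_qext _ rfl

lemma inducedMap_trans {B B' B'' : Finset (Subsp l)} (h₁ : B'' ⊆ B') (h₂ : B' ⊆ B) (q : ℤ) :
    inducedMap r X (h₁.trans h₂) q = inducedMap r X h₂ q ∘ₗ inducedMap r X h₁ q :=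
  Submodule.linearMap_qext _ rfl

lemma inducedMap_bijective_of_retraction {B B' : Finset (Subsp l)} (h : B' ⊆ B) {q : ℤ}
    (π : DFull l →ₗ[ℚ] DFull l) (hπB : ∀ p, ∀ f ∈ Dcomp X B p, π f ∈ Dcomp X B' p)
    (hπd : ∀ f, diff r (π f) = π (diff r f)) (hπB' : ∀ f ∈ Dcomp X B' q, π f = f)
    (hπid : ∀ f ∈ cocycles r X B q, π f - f ∈ (Dcomp X B (q - 1)).map (diff r)) :
    Function.Bijective (inducedMap r X h q) := by
  constructor
  · refine (injective_iff_map_eq_zero _).mpr fun a ha => ?_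
    obtain ⟨x, rfl⟩ := Submodule.Quotient.mk_surjective _ a
    rw [inducedMap_mk, cohomology_mk_eq_zero_iff] at ha
    obtain ⟨-, b, hb, hbx⟩ := ha
    refine (cohomology_mk_eq_zero_iff r X x).mpr ⟨x.2.1, π b, hπB _ b hb, ?_⟩
    rw [hπd, hbx]
    exact hπB' _ x.2.1
  · intro a
    obtain ⟨x, rfl⟩ := Submodule.Quotient.mk_surjective _ a
    have hπx : π x ∈ cocycles r X B' q :=
      ⟨hπB q x x.2.1, LinearMap.mem_ker.mpr (by rw [hπd, LinearMap.mem_ker.mp x.2.2, map_zero])⟩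
    refine ⟨Submodule.Quotient.mk ⟨π x, hπx⟩, ?_⟩
    rw [inducedMap_mk, Submodule.Quotient.eq, Submodule.mem_comap]
    exact ⟨sub_mem (Dcomp_mono X h q hπx.1) x.2.1, hπid x x.2⟩

variable {r X}

lemma inducedMap_erase_bijective {B : Finset (Subsp l)} {w w' : Subsp l} (hw'B : w' ∈ B)
    (hlt : w < w') (q : ℤ) : Function.Bijective (inducedMap r X (B.erase_subset w) q) := by
  refine inducedMap_bijective_of_retraction r X _ (retraction r w w')
    (fun _ _ hf => retraction_mem_Dcomp hw'B hlt hf) diff_retraction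
    (fun _ => retraction_eq_self (B.notMem_erase w)) fun f hf => ⟨-homotopy r w w' f,
      neg_mem (homotopy_mem_Dcomp hw'B hlt.le hf.1), ?_⟩
  rw [map_neg, retraction_apply, LinearMap.mem_ker.mp hf.2, map_zero, sub_zero]
  abel

lemma inducedMap_bijective_of_forall_lt {B₀ B : Finset (Subsp l)} (h : B₀ ⊆ B)
    (hlt : ∀ v ∈ B, v ∉ B₀ → ∃ v' ∈ B₀, v < v') (q : ℤ) :
    Function.Bijective (inducedMap r X h q) := by
  induction hn : (B \ B₀).card generalizing B with
  | zero =>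
    obtain rfl : B = B₀ :=
      (Finset.sdiff_eq_empty_iff_subset.mp (Finset.card_eq_zero.mp hn)).antisymm h
    rw [inducedMap_refl]
    exact Function.bijective_id
  | succ n ih =>
    obtain ⟨w, hw⟩ := (Finset.card_pos (s := B \ B₀)).mp (by omega)
    obtain ⟨hwB, hwB₀⟩ := Finset.mem_sdiff.mp hw
    obtain ⟨w', hw'B₀, hww'⟩ := hlt w hwB hwB₀
    have hB₀ : B₀ ⊆ B.erase w := Finset.subset_erase.mpr ⟨h, hwB₀⟩
    have hrest := ih hB₀ (fun v hv => hlt v (Finset.mem_of_mem_erase hv))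
      (by rw [Finset.erase_sdiff_comm, Finset.card_erase_of_mem hw, hn, Nat.add_sub_cancel])
    have hcomp := (inducedMap_erase_bijective (h hw'B₀) hww' q).comp hrest
    rwa [← LinearMap.coe_comp, ← inducedMap_trans] at hcomp

end Cohomology

lemma exists_lt_mem_restriction {l : ℕ} {x₀ : Subsp l} {A' : Finset (Subsp l)} {v : Subsp l}
    (hv : v ∈ tildeRestriction x₀ A') (hvA'' : v ∉ restriction x₀ A') :
    ∃ v' ∈ restriction x₀ A', v < v' := by
  obtain ⟨u, hu, hvu⟩ : ∃ u ∈ tildeRestriction x₀ A', v < u := by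
    by_contra! hmax
    exact hvA'' (Finset.mem_filter.mpr ⟨hv, hmax⟩)
  obtain ⟨m, hum, hm⟩ := Finset.exists_le_maximal _ hu
  exact ⟨m, Finset.mem_filter.mpr ⟨hm.prop, fun z hz hmz => (hm.le_of_ge hz hmz.le).not_gt hmz⟩,
    hvu.trans_le hum⟩

theorem statement1_general {l : ℕ} (r : LinearOrder (Subsp l)) (A : Finset (Subsp l))
    (x₀ : Subsp l) :
    ∀ q : ℤ,
      Function.Bijective (inducedMap r x₀ (restriction_subset x₀ (A.erase x₀)) q) :=
  inducedMap_bijective_of_forall_lt _ fun _ hv hvA'' => exists_lt_mem_restriction hv hvA''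

/-- Corollary 2.2. For a subspace arrangement `A` and `x₀ ∈ A`,
the natural inclusion `D(A'') ↪ D(Ã'')` of the model of the restricted
arrangement into the model of `Ã'' = {x₀ ∩ y : y ∈ A ∖ {x₀}}` is a
quasi-isomorphism (both are arrangements inside the ambient space `x₀`). -/
theorem statement1 {l : ℕ} (r : LinearOrder (Subsp l)) (A : Finset (Subsp l))
    (harr : IsArrangement A) (x₀ : Subsp l) (hx₀ : x₀ ∈ A) :
    ∀ q : ℤ,
      Function.Bijective (inducedMap r x₀ (restriction_subset x₀ (A.erase x₀)) q) :=
  statement1_general r A x₀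
end

section
/- Let A be a subspace arrangement in ℂ^l, x₀ ∈ A, A' = A \ {x₀}, and φ : D(A) → D(Ã'') the cochain map defined by φ(σ) = 0 if x₀ ∉ σ or if σ contains two distinct y, z ∈ A' with x₀ ∩ y = x₀ ∩ z, and φ({x₀, x_{i_1}, …, x_{i_r}}) = (−1)^r {x₀ ∩ x_{i_1}, …, x₀ ∩ x_{i_r}} otherwise. Then φ is surjective, φ vanishes on the subcomplex D(A') ⊆ D(A), and hence φ induces a surjective cochain map φ̄ : D(A)/D(A') → D(Ã''). -/
/-!
Formalization of the Yuzvinsky–Feichtner rational model `D(B)` of the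
complement of an arrangement of linear subspaces of `ℂ^l`, together with the
deletion/restriction constructions of the paper.
-/

open scoped Classical

noncomputable section

/-!
On a basis element `σ ∌ x₀` both `φ ∘ d` and `d ∘ φ` vanish, so let `σ = {x₀} ∪ s` with
`s ⊆ A'`, and write `g y = x₀ ∩ y`. If `g` is injective on `s`, the faces of `σ` other than `s`
correspond to the faces of `g(s)` via `y ↦ g y`: the order compatibility makes `g` strictly
monotone on `s`, so positions (hence signs) agree, and the two "same intersection" conditions
agree, trivially when `|s| ≥ 2` and, when `s = {y}`, because both would force `x₀ ⊆ y`, which the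
arrangement condition forbids. If `g` is not injective, pick `y < z` in `s` with `g y = g z`.
Only the faces `σ ∖ {y}` and `σ ∖ {z}` can survive `φ`; they do so only if `y, z` is the unique
collision, and then, the `∼`-classes being consecutive, `y` and `z` are adjacent and the two
terms cancel. Surjectivity comes from lifting `τ ⊆ Ã''` to an `s ⊆ A'` on which `g` is injective.
-/

open Finset

section FinsetImage

variable {α β : Type*} [DecidableEq α] [DecidableEq β] {f : α → β} {s : Finset α} {x y z : α}

lemma Finset.image_erase_of_injOn (hf : Set.InjOn f s) (hx : x ∈ s) :
    (s.erase x).image f = (s.image f).erase (f x) := by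
  ext b
  simp only [mem_image, mem_erase]
  constructor
  · rintro ⟨a, ⟨hax, has⟩, rfl⟩
    exact ⟨fun h => hax (hf has hx h), a, has, rfl⟩
  · rintro ⟨hb, a, has, rfl⟩
    exact ⟨a, ⟨by rintro rfl; exact hb rfl, has⟩, rfl⟩

lemma Finset.image_erase_of_map_eq (hz : z ∈ s) (hne : y ≠ z) (h : f y = f z) :
    (s.erase y).image f = s.image f := by
  refine (image_subset_image (erase_subset y s)).antisymm fun b hb => ?_
  obtain ⟨a, ha, rfl⟩ := mem_image.mp hb
  obtain rfl | hay := eq_or_ne a y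
  · exact h ▸ mem_image_of_mem f (mem_erase.mpr ⟨hne.symm, hz⟩)
  · exact mem_image_of_mem f (mem_erase.mpr ⟨hay, ha⟩)

lemma Finset.injOn_erase_iff_of_map_eq (hy : y ∈ s) (hz : z ∈ s) (h : f y = f z) :
    Set.InjOn f ↑(s.erase y) ↔ Set.InjOn f ↑(s.erase z) := by
  obtain rfl | hne := eq_or_ne y z
  · rfl
  rw [← card_image_iff, ← card_image_iff, image_erase_of_map_eq hz hne h,
    image_erase_of_map_eq hy hne.symm h.symm, card_erase_of_mem hy, card_erase_of_mem hz]

end FinsetImage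

variable {l : ℕ}

section Intersections

variable {x₀ x y z : Subsp l} {s : Finset (Subsp l)}

lemma inter_insert : inter (insert x s) = x ⊓ inter s :=
  inf_insert

lemma inter_image_inf (hs : s.Nonempty) :
    inter (s.image fun y => x₀ ⊓ y) = x₀ ⊓ inter s := by
  rw [inter, inf_image]
  exact (inf_inf (f := fun _ => x₀) (g := id)).trans (by rw [inf_const hs]; rfl)

lemma inter_insert_erase_of_inf_eq (hy : y ∈ s) (hz : z ∈ s) (hne : y ≠ z)
    (hg : x₀ ⊓ y = x₀ ⊓ z) : inter (insert x₀ (s.erase y)) = inter (insert x₀ s) := by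
  have hle : x₀ ⊓ inter (s.erase y) ≤ y :=
    calc x₀ ⊓ inter (s.erase y) ≤ x₀ ⊓ z :=
          inf_le_inf_left x₀ (inf_le (f := id) (mem_erase.mpr ⟨hne.symm, hz⟩))
      _ = x₀ ⊓ y := hg.symm
      _ ≤ y := inf_le_right
  conv_rhs => rw [← insert_erase hy]
  rw [inter_insert, inter_insert, inter_insert, inf_left_comm, inf_eq_right.mpr hle]

lemma inter_insert_erase_eq_iff {A : Finset (Subsp l)} (harr : IsArrangement A) (hx₀ : x₀ ∈ A)
    (hs : s ⊆ A.erase x₀) (hx : x ∈ s) :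
    inter (insert x₀ (s.erase x)) = inter (insert x₀ s) ↔
      inter ((s.erase x).image fun y => x₀ ⊓ y) = inter (s.image fun y => x₀ ⊓ y) := by
  rw [inter_insert, inter_insert]
  rcases (s.erase x).eq_empty_or_nonempty with he | hne
  · obtain rfl : s = {x} := ((erase_eq_empty_iff s x).mp he).resolve_left (ne_empty_of_mem hx)
    obtain ⟨hxx₀, hxA⟩ := mem_erase.mp (hs hx)
    have hnle : ¬ x₀ ≤ x := fun hle => hxx₀ (harr x₀ hx₀ x hxA hle).symm
    simp only [he, image_empty, image_singleton, inter, inf_empty, inf_singleton, id, inf_top_eq]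
    refine iff_of_false (fun h => hnle (inf_eq_left.mp h.symm)) fun h => hnle ?_
    rw [(inf_eq_top_iff.mp h.symm).2]
    exact le_top
  · rw [inter_image_inf hne, inter_image_inf ⟨x, hx⟩]

end Intersections

section LinearOrder

variable {α : Type*} [LinearOrder α] {s : Finset α} {a x y z : α}

lemma Finset.card_filter_lt_insert_of_lt [DecidableEq α] (ha : a ∉ s) (hlt : a < x) :
    #((insert a s).filter (· < x)) = #(s.filter (· < x)) + 1 := by
  rw [filter_insert, if_pos hlt, card_insert_of_notMem fun h => ha (mem_filter.mp h).1]

lemma Finset.card_filter_lt_eq_succ_of_adjacent [DecidableEq α] (hy : y ∈ s) (hyz : y < z)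
    (hadj : ∀ w ∈ s, y < w → ¬ w < z) : #(s.filter (· < z)) = #(s.filter (· < y)) + 1 := by
  have hfilter : s.filter (· < z) = insert y (s.filter (· < y)) := by
    ext w
    simp only [mem_filter, mem_insert]
    constructor
    · rintro ⟨hw, hwz⟩
      rcases lt_trichotomy w y with h | rfl | h
      · exact Or.inr ⟨hw, h⟩
      · exact Or.inl rfl
      · exact absurd hwz (hadj w hw h)
    · rintro (rfl | ⟨hw, hwy⟩)
      · exact ⟨hy, hyz⟩
      · exact ⟨hw, hwy.trans hyz⟩
  rw [hfilter, card_insert_of_notMem (by simp)]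

lemma StrictMonoOn.card_filter_lt_image {β : Type*} [LinearOrder β] [DecidableEq β] {g : α → β}
    (hg : StrictMonoOn g s) (hx : x ∈ s) :
    #((s.image g).filter (· < g x)) = #(s.filter (· < x)) := by
  rw [filter_image, card_image_of_injOn (hg.injOn.mono (filter_subset _ s))]
  exact congrArg card (filter_congr fun y hy => hg.lt_iff_lt hy hx)

end LinearOrder

section Position

variable (r : LinearOrder (Subsp l)) {s : Finset (Subsp l)} {a x y z : Subsp l}

lemma pos_insert_of_lt (ha : a ∉ s) (hlt : r.lt a x) : pos r (insert a s) x = pos r s x + 1 :=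
  congrArg (· + 1) (@card_filter_lt_insert_of_lt _ r _ _ _ _ ha hlt)

lemma pos_eq_succ_of_adjacent (hy : y ∈ s) (hyz : r.lt y z)
    (hadj : ∀ w ∈ s, r.lt y w → ¬ r.lt w z) : pos r s z = pos r s y + 1 :=
  congrArg (· + 1) (@card_filter_lt_eq_succ_of_adjacent _ r _ _ _ _ hy hyz hadj)

lemma pos_image_of_strictMonoOn {g : Subsp l → Subsp l}
    (hg : @StrictMonoOn _ _ r.toPreorder r.toPreorder g s) (hx : x ∈ s) :
    pos r (s.image g) (g x) = pos r s x :=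
  congrArg (· + 1) (@StrictMonoOn.card_filter_lt_image _ r _ _ _ r _ _ hg hx)

end Position

/-- A linear order on `Subsp l` that is not an instance: as a local instance it would compete with
the lattice order of subspaces, to which `≤` and `⊓` refer. -/
structure SubspOrder (l : ℕ) where
  ord : LinearOrder (Subsp l)

namespace GoodOrder

variable {R : SubspOrder l} {A s : Finset (Subsp l)} {x₀ y z : Subsp l}

lemma strictMonoOn_inf (hord : GoodOrder R.ord A x₀) (hs : s ⊆ A.erase x₀)
    (hinj : Set.InjOn (fun y => x₀ ⊓ y) ↑s) :
    @StrictMonoOn _ _ R.ord.toPreorder R.ord.toPreorder (fun y => x₀ ⊓ y) ↑s :=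
  fun _ hy _ hz hyz => hord.2.2 _ (hs hy) _ (hs hz) hyz
    (hinj.ne hy hz (@ne_of_lt _ R.ord.toPreorder _ _ hyz))

lemma adjacent_of_inf_eq (hord : GoodOrder R.ord A x₀) (hs : s ⊆ A.erase x₀) (hy : y ∈ s)
    (hz : z ∈ s) (hyz : R.ord.lt y z) (hg : x₀ ⊓ y = x₀ ⊓ z)
    (hinj : Set.InjOn (fun w => x₀ ⊓ w) ↑(s.erase y)) :
    ∀ w ∈ s, R.ord.lt y w → ¬ R.ord.lt w z := by
  intro w hw hyw hwz
  have hgw := hord.2.1 y (hs hy) w (hs hw) z (hs hz) (@le_of_lt _ R.ord.toPreorder _ _ hyw)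
    (@le_of_lt _ R.ord.toPreorder _ _ hwz) hg
  refine @ne_of_lt _ R.ord.toPreorder _ _ hwz (hinj ?_ ?_ (hgw.symm.trans hg))
  · exact mem_erase.mpr ⟨@ne_of_gt _ R.ord.toPreorder _ _ hyw, hw⟩
  · exact mem_erase.mpr ⟨@ne_of_gt _ R.ord.toPreorder _ _ hyz, hz⟩

end GoodOrder

section CochainMap

variable {R : SubspOrder l} {A s σ : Finset (Subsp l)} {x₀ y z : Subsp l}

lemma phiBasis_of_notMem (h : x₀ ∉ σ) : phiBasis x₀ σ = 0 := by
  rw [phiBasis, if_neg fun hc => h hc.1]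

lemma phiBasis_insert (h : x₀ ∉ s) :
    phiBasis x₀ (insert x₀ s) = if Set.InjOn (fun y => x₀ ⊓ y) ↑s then
      ((-1 : ℚ) ^ #s) • Finsupp.single (s.image fun y => x₀ ⊓ y) 1 else 0 := by
  simp only [phiBasis, mem_insert_self, true_and, erase_insert h, card_insert_of_notMem h,
    Nat.add_sub_cancel]

lemma phi_dBasis_insert (h0 : x₀ ∉ s) (hfirst : ∀ x ∈ s, R.ord.lt x₀ x) :
    phi x₀ (dBasis R.ord (insert x₀ s)) = ∑ x ∈ s,
      if inter (insert x₀ (s.erase x)) = inter (insert x₀ s) then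
        ((-1 : ℚ) ^ (pos R.ord s x + 1)) • phiBasis x₀ (insert x₀ (s.erase x)) else 0 := by
  rw [dBasis, map_sum]
  simp only [map_smul, phi_apply_single]
  rw [sum_filter, sum_insert h0, erase_insert h0, phiBasis_of_notMem h0, smul_zero, ite_self,
    zero_add]
  refine sum_congr rfl fun x hx => ?_
  have hx₀x : x₀ ≠ x := fun h => h0 (h ▸ hx)
  rw [erase_insert_of_ne hx₀x, pos_insert_of_lt R.ord h0 (hfirst x hx)]

lemma phi_dBasis_insert_of_injOn (harr : IsArrangement A) (hx₀ : x₀ ∈ A)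
    (hord : GoodOrder R.ord A x₀) (hs : s ⊆ A.erase x₀) (hinj : Set.InjOn (fun y => x₀ ⊓ y) ↑s) :
    phi x₀ (dBasis R.ord (insert x₀ s)) = diff R.ord (phiBasis x₀ (insert x₀ s)) := by
  have h0 : x₀ ∉ s := fun h => notMem_erase x₀ A (hs h)
  rw [phi_dBasis_insert h0 fun x hx => hord.1 x (hs hx), phiBasis_insert h0, if_pos hinj,
    map_smul, diff_apply_single, dBasis, sum_filter, sum_image fun _ hy _ hz h => hinj hy hz h,
    smul_sum]
  refine sum_congr rfl fun x hx => ?_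
  have hx0 : x₀ ∉ s.erase x := fun h => h0 (mem_of_mem_erase h)
  rw [← image_erase_of_injOn hinj hx, phiBasis_insert hx0,
    if_pos (hinj.mono (coe_subset.mpr (erase_subset x s))),
    pos_image_of_strictMonoOn R.ord (hord.strictMonoOn_inf hs hinj) hx, smul_ite, smul_zero]
  refine if_congr (inter_insert_erase_eq_iff harr hx₀ hs hx) ?_ rfl
  rw [smul_smul, smul_smul, ← card_erase_add_one hx]
  ring_nf

lemma phi_dBasis_insert_of_inf_eq (hord : GoodOrder R.ord A x₀) (hs : s ⊆ A.erase x₀)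
    (hy : y ∈ s) (hz : z ∈ s) (hyz : R.ord.lt y z) (hg : x₀ ⊓ y = x₀ ⊓ z) :
    phi x₀ (dBasis R.ord (insert x₀ s)) = 0 := by
  have h0 : x₀ ∉ s := fun h => notMem_erase x₀ A (hs h)
  have h0' : ∀ x, x₀ ∉ s.erase x := fun x h => h0 (mem_of_mem_erase h)
  have hne : y ≠ z := @ne_of_lt _ R.ord.toPreorder _ _ hyz
  have hcollide : ∀ x, x ≠ y → x ≠ z → ¬ Set.InjOn (fun w => x₀ ⊓ w) ↑(s.erase x) :=
    fun x hxy hxz hinj =>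
      hne (hinj (mem_erase.mpr ⟨hxy.symm, hy⟩) (mem_erase.mpr ⟨hxz.symm, hz⟩) hg)
  rw [phi_dBasis_insert h0 fun x hx => hord.1 x (hs hx)]
  by_cases hinj : Set.InjOn (fun w => x₀ ⊓ w) ↑(s.erase y)
  · have hinj' := (injOn_erase_iff_of_map_eq hy hz hg).mp hinj
    rw [sum_eq_add y z hne (fun x _ hx => ?_) (absurd hy) (absurd hz),
      if_pos (inter_insert_erase_of_inf_eq hy hz hne hg),
      if_pos (inter_insert_erase_of_inf_eq hz hy hne.symm hg.symm),
      phiBasis_insert (h0' y), phiBasis_insert (h0' z), if_pos hinj, if_pos hinj',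
      image_erase_of_map_eq hz hne hg, image_erase_of_map_eq hy hne.symm hg.symm,
      card_erase_of_mem hy, card_erase_of_mem hz,
      pos_eq_succ_of_adjacent R.ord hy hyz (hord.adjacent_of_inf_eq hs hy hz hyz hg hinj),
      smul_smul, smul_smul, ← add_smul]
    · exact smul_eq_zero_of_left (by ring) _
    · rw [phiBasis_insert (h0' x), if_neg (hcollide x hx.1 hx.2), smul_zero, ite_self]
  · refine sum_eq_zero fun x _ => ?_
    have hinjx : ¬ Set.InjOn (fun w => x₀ ⊓ w) ↑(s.erase x) := by
      obtain rfl | hxy := eq_or_ne x y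
      · exact hinj
      obtain rfl | hxz := eq_or_ne x z
      · exact mt (injOn_erase_iff_of_map_eq hy hz hg).mpr hinj
      exact hcollide x hxy hxz
    rw [phiBasis_insert (h0' x), if_neg hinjx, smul_zero, ite_self]

lemma phi_dBasis (harr : IsArrangement A) (hx₀ : x₀ ∈ A) (hord : GoodOrder R.ord A x₀)
    (hσ : σ ⊆ A) : phi x₀ (dBasis R.ord σ) = diff R.ord (phiBasis x₀ σ) := by
  by_cases h0 : x₀ ∈ σ
  · have hs : σ.erase x₀ ⊆ A.erase x₀ := erase_subset_erase x₀ hσ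
    rw [← insert_erase h0]
    by_cases hinj : Set.InjOn (fun y => x₀ ⊓ y) ↑(σ.erase x₀)
    · exact phi_dBasis_insert_of_injOn harr hx₀ hord hs hinj
    rw [phiBasis_insert (notMem_erase x₀ σ), if_neg hinj, map_zero]
    simp only [Set.InjOn, not_forall, exists_prop, mem_coe] at hinj
    obtain ⟨y, hy, z, hz, hg, hne⟩ := hinj
    rcases @lt_or_gt_of_ne _ R.ord _ _ hne with hyz | hzy
    · exact phi_dBasis_insert_of_inf_eq hord hs hy hz hyz hg
    · exact phi_dBasis_insert_of_inf_eq hord hs hz hy hzy hg.symm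
  · rw [phiBasis_of_notMem h0, map_zero, dBasis, map_sum]
    refine sum_eq_zero fun x _ => ?_
    rw [map_smul, phi_apply_single, phiBasis_of_notMem fun h => h0 (mem_of_mem_erase h), smul_zero]

lemma phi_comp_diff_eqOn_Dsub (harr : IsArrangement A) (hx₀ : x₀ ∈ A)
    (hord : GoodOrder R.ord A x₀) :
    Set.EqOn (phi x₀ ∘ₗ diff R.ord) (diff R.ord ∘ₗ phi x₀) (Dsub A) := by
  refine LinearMap.eqOn_span' ?_
  rintro _ ⟨σ, hσ, rfl⟩
  simp only [LinearMap.comp_apply, diff_apply_single, phi_apply_single]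
  exact phi_dBasis harr hx₀ hord hσ

lemma phiBar_diffQuot (harr : IsArrangement A) (hx₀ : x₀ ∈ A) (hord : GoodOrder R.ord A x₀)
    (g : DQuot A x₀) : phiBar x₀ A (diffQuot R.ord A x₀ g) = diff R.ord (phiBar x₀ A g) := by
  obtain ⟨v, rfl⟩ := Submodule.Quotient.mk_surjective _ g
  exact phi_comp_diff_eqOn_Dsub harr hx₀ hord v.2

lemma map_phi_Dsub (hx₀ : x₀ ∈ A) :
    Submodule.map (phi x₀) (Dsub A) = Dsub (tildeRestriction x₀ (A.erase x₀)) := by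
  apply le_antisymm
  · rw [Dsub, Submodule.map_span, Submodule.span_le]
    rintro _ ⟨_, ⟨σ, hσ, rfl⟩, rfl⟩
    rw [SetLike.mem_coe, phi_apply_single, phiBasis]
    split_ifs
    · exact Submodule.smul_mem _ _
        (Submodule.subset_span ⟨_, image_subset_image (erase_subset_erase x₀ hσ), rfl⟩)
    · exact zero_mem _
  · refine Submodule.span_le.mpr ?_
    rintro _ ⟨τ, hτ, rfl⟩
    obtain ⟨s, hs, hinj, rfl⟩ := exists_subset_injOn_image_eq_of_surjOn
      (f := fun y => x₀ ⊓ y) (↑(A.erase x₀)) τ fun w hw => mem_image.mp (hτ hw)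
    have h0 : x₀ ∉ s := fun h => notMem_erase x₀ A (hs h)
    have hσ : insert x₀ s ⊆ A := insert_subset hx₀ ((coe_subset.mp hs).trans (erase_subset x₀ A))
    have hlift : phi x₀ (((-1 : ℚ) ^ #s) • Finsupp.single (insert x₀ s) 1) =
        Finsupp.single (s.image fun y => x₀ ⊓ y) 1 := by
      rw [map_smul, phi_apply_single, phiBasis_insert h0, if_pos hinj, smul_smul, ← pow_add,
        Even.neg_one_pow ⟨_, rfl⟩, one_smul]
    rw [← hlift]
    exact Submodule.mem_map_of_mem (Submodule.smul_mem _ _ (Submodule.subset_span ⟨_, hσ, rfl⟩))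

end CochainMap

end
/-- `φ` maps `D(A)` onto `D(Ã'')`, vanishes on the subcomplex
`D(A')`, and hence induces a surjective cochain map
`φ̄ : D(A)/D(A') → D(Ã'')`. -/
theorem statement3 {l : ℕ} (r : LinearOrder (Subsp l)) (A : Finset (Subsp l))
    (harr : IsArrangement A) (x₀ : Subsp l) (hx₀ : x₀ ∈ A) (hord : GoodOrder r A x₀) :
    Submodule.map (phi x₀) (Dsub A) = Dsub (tildeRestriction x₀ (A.erase x₀)) ∧
    (∀ f ∈ Dsub (A.erase x₀), phi x₀ f = 0) ∧
    LinearMap.range (phiBar x₀ A) = Dsub (tildeRestriction x₀ (A.erase x₀)) ∧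
    (∀ g : DQuot A x₀, phiBar x₀ A (diffQuot r A x₀ g) = diff r (phiBar x₀ A g)) := by
  have hmap := map_phi_Dsub hx₀
  refine ⟨hmap, phi_vanish x₀ (Finset.notMem_erase x₀ A), ?_,
    phiBar_diffQuot (R := ⟨r⟩) harr hx₀ hord⟩
  rw [phiBar, Submodule.range_liftQ, LinearMap.range_comp, Submodule.range_subtype, hmap]
end
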